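/- Assume the Setup. Let L ∈ A satisfy condition (2), and suppose there is a k-subspace U ⊆ M satisfying condition (1) for L. Then there exists a nonzero D ∈ A with L·D = D·L₀; in fact, if s ∈ S is a witness for condition (1) and N is the smallest integer with ad_{L,L₀}^{N+1}(s) = 0 (such N exists), then D := ad_{L,L₀}^{N}(s) is nonzero and satisfies L·D = D·L₀. -/

import Mathlib

/-- `adOp a b x = a*x - x*b`, the operator `ad_{a,b}`. -/
def adOp {A : Type*} [Ring A] (a b : A) : A → A := fun x => a * x - x * b

/-- The ad-nilpotency degree of `b` with respect to `L₀`: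
the smallest `n` with `ad_{L₀}^[n+1] b = 0`. -/
noncomputable def degAd {A : Type*} [Ring A] (L₀ b : A) : ℕ :=
  sInf {n : ℕ | (adOp L₀ L₀)^[n + 1] b = 0}

/-- Condition (2) of Theorem 4.4: `L = L₀` or `deg(L - L₀) < 0`, expressed via some `s' ∈ S`
with `s'(L - L₀)` a nonzero element of `B` of `ad_{L₀}`-degree smaller than that of `s'`. -/
def cond2 {k A : Type*} [CommSemiring k] [Ring A] [Algebra k A]
    (B : Subalgebra k A) (S : Set A) (L₀ L : A) : Prop :=
  L = L₀ ∨ ∃ s' ∈ S, s' * (L - L₀) ∈ B ∧ s' * (L - L₀) ≠ 0 ∧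
    degAd L₀ (s' * (L - L₀)) < degAd L₀ s'

/-- A `k`-subspace of the `A`-module `M` (with `k` acting through `algebraMap k A`). -/
def isSubspace (k A : Type*) {M : Type*} [CommSemiring k] [Ring A] [Algebra k A]
    [AddCommGroup M] [Module A M] (U : Set M) : Prop :=
  (0 : M) ∈ U ∧ (∀ u ∈ U, ∀ v ∈ U, u + v ∈ U) ∧
    (∀ c : k, ∀ u ∈ U, (algebraMap k A c) • u ∈ U)

/-!
Extend the `ad_{L₀}`-degree from `B` to `A = S⁻¹B` by `deg (t⁻¹ b) = deg b - deg t`. It stays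
additive on products because `A` is a domain of characteristic zero: the top term of the Leibniz
rule survives. Condition (2) says `deg (L - L₀) ≤ -1`, so `ad_{L,L₀} x = (L - L₀) x + ad_{L₀} x`
has degree at most `deg x - 1`, and `deg (ad_{L,L₀}^n s) ≤ deg s - n`. On the other hand
`s · ad_{L,L₀}^n s` preserves `U₀`, so it lies in `B` and `deg (ad_{L,L₀}^n s) ≥ -deg s` unless
`ad_{L,L₀}^n s = 0`. Hence `ad_{L,L₀}^{2 deg s + 1} s = 0`, and the last nonzero iterate of
`ad_{L,L₀}` on `s` intertwines `L₀` with `L`.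
-/

open Finset

section AdDegree

variable {A : Type*} [Ring A] (L₀ : A)

local notation "∂" => adOp L₀ L₀

def adHom : A →+ A := AddMonoidHom.mulLeft L₀ - AddMonoidHom.mulRight L₀

lemma coe_adHom : ⇑(adHom L₀) = ∂ := rfl

lemma adOp_mul (x y : A) : ∂ (x * y) = ∂ x * y + x * ∂ y := by
  simp only [adOp]
  noncomm_ring

theorem adOp_iterate_mul (n : ℕ) (x y : A) :
    ∂^[n] (x * y) = ∑ ij ∈ antidiagonal n, n.choose ij.1 • (∂^[ij.1] x * ∂^[ij.2] y) := by
  induction n with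
  | zero => simp
  | succ n ih =>
    rw [sum_antidiagonal_choose_succ_nsmul (M := A) (fun i j => ∂^[i] x * ∂^[j] y) n]
    rw [Function.iterate_succ_apply', ih, ← coe_adHom, map_sum]
    simp only [map_nsmul, coe_adHom, adOp_mul, smul_add, sum_add_distrib,
      ← Function.iterate_succ_apply' (∂)]
    rw [add_comm]
    congr 1
    refine sum_congr rfl fun ⟨i, j⟩ hij ↦ ?_
    rw [n.choose_symm_of_eq_add (mem_antidiagonal.1 hij).symm]

/-- For `r < 0` this forces `x = 0`. -/
def AdDegLE (x : A) (r : ℤ) : Prop := ∀ n : ℕ, r < n → ∂^[n] x = 0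

variable {L₀}

lemma AdDegLE.mono {x : A} {r r' : ℤ} (hx : AdDegLE L₀ x r) (h : r ≤ r') : AdDegLE L₀ x r' :=
  fun n hn => hx n (h.trans_lt hn)

lemma AdDegLE.eq_zero {x : A} {r : ℤ} (hx : AdDegLE L₀ x r) (hr : r < 0) : x = 0 :=
  hx 0 hr

lemma adDegLE_zero (r : ℤ) : AdDegLE L₀ (0 : A) r := fun n _ => by
  rw [← coe_adHom, iterate_map_zero]

lemma AdDegLE.add {x y : A} {r : ℤ} (hx : AdDegLE L₀ x r) (hy : AdDegLE L₀ y r) :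
    AdDegLE L₀ (x + y) r := fun n hn => by
  rw [← coe_adHom, iterate_map_add, coe_adHom, hx n hn, hy n hn, add_zero]

lemma AdDegLE.neg {x : A} {r : ℤ} (hx : AdDegLE L₀ x r) : AdDegLE L₀ (-x) r := fun n hn => by
  rw [← coe_adHom, iterate_map_neg, coe_adHom, hx n hn, neg_zero]

lemma AdDegLE.adOp_self {x : A} {r : ℤ} (hx : AdDegLE L₀ x r) : AdDegLE L₀ (∂ x) (r - 1) :=
  fun n hn => by
    rw [← Function.iterate_succ_apply]
    exact hx (n + 1) (by push_cast; omega)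

lemma AdDegLE.mul {x y : A} {a b : ℤ} (hx : AdDegLE L₀ x a) (hy : AdDegLE L₀ y b) :
    AdDegLE L₀ (x * y) (a + b) := by
  intro n hn
  rw [adOp_iterate_mul]
  refine sum_eq_zero fun ⟨i, j⟩ hij => ?_
  have hij := mem_antidiagonal.1 hij
  rcases lt_or_ge a i with hi | hi
  · rw [hx i hi, zero_mul, smul_zero]
  · rw [hy j (by omega), mul_zero, smul_zero]

end AdDegree

lemma iterate_sInf_ne_zero {α : Type*} [Zero α] (f : α → α) {x : α} (hx : x ≠ 0) :
    f^[sInf {n | f^[n + 1] x = 0}] x ≠ 0 := by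
  intro h
  rcases hN : sInf {n | f^[n + 1] x = 0} with _ | m
  · exact hx (by rwa [hN] at h)
  · rw [hN] at h
    have := Nat.sInf_le (s := {n | f^[n + 1] x = 0}) h
    omega

section Degree

variable {A : Type*} [Ring A] {L₀ : A}

local notation "∂" => adOp L₀ L₀

lemma adDegLE_degAd {x : A} (hx : ∃ n, ∂^[n] x = 0) : AdDegLE L₀ x (degAd L₀ x) := by
  obtain ⟨n, hn⟩ := hx
  have hmem : ∂^[degAd L₀ x + 1] x = 0 := Nat.sInf_mem (s := {n | ∂^[n + 1] x = 0})
    ⟨n, show ∂^[n + 1] x = 0 by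
      rw [Function.iterate_succ_apply', hn, adOp, mul_zero, zero_mul, sub_zero]⟩
  intro m hm
  obtain ⟨c, rfl⟩ := Nat.exists_eq_add_of_le (show degAd L₀ x + 1 ≤ m by omega)
  rw [add_comm, Function.iterate_add_apply, hmem, ← coe_adHom, iterate_map_zero]

lemma AdDegLE.degAd_le {x : A} {r : ℤ} (hx : AdDegLE L₀ x r) (hx0 : x ≠ 0) :
    (degAd L₀ x : ℤ) ≤ r := by
  have hr : 0 ≤ r := not_lt.1 fun hr => hx0 (hx.eq_zero hr)
  have := Nat.sInf_le (s := {n | ∂^[n + 1] x = 0}) (hx (r.toNat + 1) (by omega))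
  exact (Int.ofNat_le.2 this).trans (Int.toNat_of_nonneg hr).le

lemma adOp_iterate_add_mul {x y : A} {a b : ℕ} (hx : AdDegLE L₀ x a) (hy : AdDegLE L₀ y b) :
    ∂^[a + b] (x * y) = (a + b).choose a • (∂^[a] x * ∂^[b] y) := by
  rw [adOp_iterate_mul, sum_eq_single (a, b)]
  · rintro ⟨i, j⟩ hij hne
    have hij := mem_antidiagonal.1 hij
    obtain hi | rfl | hi := lt_trichotomy i a
    · rw [hy j (by omega), mul_zero, smul_zero]
    · exact absurd (by rw [show j = b by omega]) hne
    · rw [hx i (by exact_mod_cast hi), zero_mul, smul_zero]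
  · simp

variable [IsDomain A] [CharZero A]

theorem degAd_mul {x y : A} (hx0 : x ≠ 0) (hy0 : y ≠ 0) (hx : ∃ n, ∂^[n] x = 0)
    (hy : ∃ n, ∂^[n] y = 0) : degAd L₀ (x * y) = degAd L₀ x + degAd L₀ y := by
  have hxy := (adDegLE_degAd hx).mul (adDegLE_degAd hy)
  have hle := hxy.degAd_le (mul_ne_zero hx0 hy0)
  have htop : ∂^[degAd L₀ x + degAd L₀ y] (x * y) ≠ 0 := by
    rw [adOp_iterate_add_mul (adDegLE_degAd hx) (adDegLE_degAd hy), nsmul_eq_mul]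
    exact mul_ne_zero (Nat.cast_ne_zero.2 (Nat.choose_pos (Nat.le_add_right _ _)).ne')
      (mul_ne_zero (iterate_sInf_ne_zero _ hx0) (iterate_sInf_ne_zero _ hy0))
  refine le_antisymm (by exact_mod_cast hle) (not_lt.1 fun hlt => htop ?_)
  exact adDegLE_degAd ⟨degAd L₀ x + degAd L₀ y + 1, hxy _ (by push_cast; omega)⟩ _
    (by exact_mod_cast hlt)

end Degree

section Fractions

variable {A : Type*} [Ring A] {L₀ : A} {S : Set A}

local notation "∂" => adOp L₀ L₀

lemma degAd_one : degAd L₀ (1 : A) = 0 :=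
  Nat.sInf_eq_zero.2 (Or.inl (by simp [adOp]))

/-- `x` has degree at most `m` for the extension `deg (t⁻¹ * b) = deg b - deg t` of `degAd` to
fractions with denominators `t ∈ S`. -/
def LocDegLE (L₀ : A) (S : Set A) (x : A) (m : ℤ) : Prop :=
  ∃ t ∈ S, AdDegLE L₀ (t * x) (degAd L₀ t + m)

lemma LocDegLE.mono {x : A} {m m' : ℤ} (hx : LocDegLE L₀ S x m) (h : m ≤ m') :
    LocDegLE L₀ S x m' :=
  let ⟨t, ht, htx⟩ := hx
  ⟨t, ht, htx.mono (by omega)⟩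

lemma LocDegLE.of_adDegLE (hS1 : (1 : A) ∈ S) {x : A} {m : ℤ} (hx : AdDegLE L₀ x m) :
    LocDegLE L₀ S x m :=
  ⟨1, hS1, by rwa [one_mul, degAd_one, Nat.cast_zero, zero_add]⟩

lemma LocDegLE.neg {x : A} {m : ℤ} (hx : LocDegLE L₀ S x m) : LocDegLE L₀ S (-x) m :=
  let ⟨t, ht, htx⟩ := hx
  ⟨t, ht, by rw [mul_neg]; exact htx.neg⟩

/-- `A = S⁻¹B` for a commutative set `S` of units, with `B` enlarged to all
`ad_{L₀}`-nilpotent elements. -/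
structure IsAdDenominatorSet (L₀ : A) (S : Set A) : Prop where
  one_mem : (1 : A) ∈ S
  zero_notMem : (0 : A) ∉ S
  mul_mem : ∀ s ∈ S, ∀ t ∈ S, s * t ∈ S
  mul_comm : ∀ s ∈ S, ∀ t ∈ S, s * t = t * s
  isUnit : ∀ t ∈ S, IsUnit t
  nilpotent : ∀ t ∈ S, ∃ n, (adOp L₀ L₀)^[n] t = 0
  ore : ∀ a : A, ∃ t ∈ S, ∃ n, (adOp L₀ L₀)^[n] (t * a) = 0

namespace IsAdDenominatorSet

lemma ne_zero (hS : IsAdDenominatorSet L₀ S) {t : A} (ht : t ∈ S) : t ≠ 0 :=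
  ne_of_mem_of_not_mem ht hS.zero_notMem

lemma adDegLE_degAd (hS : IsAdDenominatorSet L₀ S) {t : A} (ht : t ∈ S) :
    AdDegLE L₀ t (degAd L₀ t) :=
  _root_.adDegLE_degAd (hS.nilpotent t ht)

variable [IsDomain A] [CharZero A]

lemma degAd_mul (hS : IsAdDenominatorSet L₀ S) {s t : A} (hs : s ∈ S) (ht : t ∈ S) :
    degAd L₀ (s * t) = degAd L₀ s + degAd L₀ t :=
  _root_.degAd_mul (hS.ne_zero hs) (hS.ne_zero ht) (hS.nilpotent s hs) (hS.nilpotent t ht)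

end IsAdDenominatorSet

variable [IsDomain A] [CharZero A]

lemma AdDegLE.of_mul_right {f t : A} {r : ℤ} (hf : ∃ n, ∂^[n] f = 0) (ht0 : t ≠ 0)
    (ht : ∃ n, ∂^[n] t = 0) (h : AdDegLE L₀ (f * t) r) : AdDegLE L₀ f (r - degAd L₀ t) := by
  rcases eq_or_ne f 0 with rfl | hf0
  · exact adDegLE_zero _
  have hle := h.degAd_le (mul_ne_zero hf0 ht0)
  rw [degAd_mul hf0 ht0 hf ht] at hle
  exact (adDegLE_degAd hf).mono (by omega)

lemma LocDegLE.add (hS : IsAdDenominatorSet L₀ S) {x y : A} {m : ℤ} (hx : LocDegLE L₀ S x m)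
    (hy : LocDegLE L₀ S y m) : LocDegLE L₀ S (x + y) m := by
  obtain ⟨t₁, ht₁, hx⟩ := hx
  obtain ⟨t₂, ht₂, hy⟩ := hy
  have e : t₁ * t₂ * (x + y) = t₂ * (t₁ * x) + t₁ * (t₂ * y) := by
    simp only [mul_add, ← mul_assoc, hS.mul_comm t₁ ht₁ t₂ ht₂]
  refine ⟨t₁ * t₂, hS.mul_mem t₁ ht₁ t₂ ht₂, ?_⟩
  rw [e, hS.degAd_mul ht₁ ht₂]
  exact (((hS.adDegLE_degAd ht₂).mul hx).mono (by omega)).add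
    (((hS.adDegLE_degAd ht₁).mul hy).mono (by omega))

lemma LocDegLE.of_mul_left (hS : IsAdDenominatorSet L₀ S) {t x : A} {m : ℤ} (ht : t ∈ S)
    (h : LocDegLE L₀ S (t * x) m) : LocDegLE L₀ S x (m - degAd L₀ t) := by
  obtain ⟨u, hu, hutx⟩ := h
  refine ⟨u * t, hS.mul_mem u hu t ht, ?_⟩
  rw [mul_assoc, hS.degAd_mul hu ht]
  exact hutx.mono (by omega)

lemma LocDegLE.mul (hS : IsAdDenominatorSet L₀ S) {x y : A} {r m : ℤ} (hy : LocDegLE L₀ S y r)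
    (hx : LocDegLE L₀ S x m) : LocDegLE L₀ S (y * x) (r + m) := by
  obtain ⟨t₁, ht₁, hy⟩ := hy
  obtain ⟨t₂, ht₂, hx⟩ := hx
  obtain ⟨w, hw⟩ := hS.isUnit t₂ ht₂
  obtain ⟨e, he, hf⟩ := hS.ore (t₁ * y * ↑w⁻¹)
  set f := e * (t₁ * y * ↑w⁻¹)
  have hft : f * t₂ = e * (t₁ * y) := by simp only [f, ← hw, mul_assoc, Units.inv_mul, mul_one]
  have hf' := AdDegLE.of_mul_right hf (hS.ne_zero ht₂) (hS.nilpotent t₂ ht₂)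
    (hft ▸ (hS.adDegLE_degAd he).mul hy)
  refine ⟨e * t₁, hS.mul_mem e he t₁ ht₁, ?_⟩
  have e' : e * t₁ * (y * x) = f * (t₂ * x) := by simp only [← mul_assoc, hft]
  rw [e', hS.degAd_mul he ht₁]
  exact (hf'.mul hx).mono (by omega)

lemma LocDegLE.adOp_self (hS : IsAdDenominatorSet L₀ S) {x : A} {m : ℤ} (hx : LocDegLE L₀ S x m) :
    LocDegLE L₀ S (∂ x) (m - 1) := by
  obtain ⟨t, ht, htx⟩ := id hx
  have e : t * ∂ x = ∂ (t * x) + -(∂ t * x) := by rw [adOp_mul]; abel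
  have hdt : LocDegLE L₀ S (∂ t) (degAd L₀ t - 1) :=
    .of_adDegLE hS.one_mem (hS.adDegLE_degAd ht).adOp_self
  have key : LocDegLE L₀ S (t * ∂ x) (degAd L₀ t + m - 1) := by
    rw [e]
    exact (LocDegLE.of_adDegLE hS.one_mem htx.adOp_self).add hS
      (((hdt.mul hS hx).mono (by omega)).neg)
  exact (key.of_mul_left hS ht).mono (by omega)

end Fractions

section Shift

variable {A : Type*} [Ring A] {L₀ : A} {S : Set A}

local notation "∂" => adOp L₀ L₀

lemma adOp_eq_sub_mul_add (L L₀ x : A) : adOp L L₀ x = (L - L₀) * x + adOp L₀ L₀ x := by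
  simp only [adOp]
  noncomm_ring

lemma locDegLE_sub_of_cond2 {k : Type*} [CommSemiring k] [Algebra k A] {B : Subalgebra k A}
    {L : A} (hS1 : (1 : A) ∈ S) (hB : ∀ b ∈ B, ∃ n, ∂^[n] b = 0) (h : cond2 B S L₀ L) :
    LocDegLE L₀ S (L - L₀) (-1) := by
  rcases h with rfl | ⟨s', hs', hcB, -, hdeg⟩
  · exact .of_adDegLE hS1 (by rw [sub_self]; exact adDegLE_zero _)
  · exact ⟨s', hs', (adDegLE_degAd (hB _ hcB)).mono (by omega)⟩

variable [IsDomain A] [CharZero A]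

lemma LocDegLE.adOp_of_sub (hS : IsAdDenominatorSet L₀ S) {L x : A} {m : ℤ}
    (hx : LocDegLE L₀ S x m) (hL : LocDegLE L₀ S (L - L₀) (-1)) :
    LocDegLE L₀ S (adOp L L₀ x) (m - 1) := by
  rw [adOp_eq_sub_mul_add]
  exact ((hL.mul hS hx).mono (by omega)).add hS (hx.adOp_self hS)

lemma LocDegLE.iterate_adOp (hS : IsAdDenominatorSet L₀ S) {L x : A} {m : ℤ}
    (hx : LocDegLE L₀ S x m) (hL : LocDegLE L₀ S (L - L₀) (-1)) (n : ℕ) :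
    LocDegLE L₀ S ((adOp L L₀)^[n] x) (m - n) := by
  induction n with
  | zero => simpa using hx
  | succ n ih =>
    rw [Function.iterate_succ_apply']
    exact (ih.adOp_of_sub hS hL).mono (by push_cast; omega)

lemma LocDegLE.neg_degAd_le (hS : IsAdDenominatorSet L₀ S) {s x : A} {m : ℤ} (hs : s ∈ S)
    (hx0 : x ≠ 0) (hsx : ∃ n, ∂^[n] (s * x) = 0) (hx : LocDegLE L₀ S x m) :
    -(degAd L₀ s : ℤ) ≤ m := by
  obtain ⟨u, hu, hux⟩ := hx
  have h := ((hS.adDegLE_degAd hs).mul hux).degAd_le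
    (mul_ne_zero (hS.ne_zero hs) (mul_ne_zero (hS.ne_zero hu) hx0))
  rw [← mul_assoc, hS.mul_comm s hs u hu, mul_assoc, degAd_mul (hS.ne_zero hu)
    (mul_ne_zero (hS.ne_zero hs) hx0) (hS.nilpotent u hu) hsx] at h
  omega

theorem adOp_iterate_eq_zero (hS : IsAdDenominatorSet L₀ S) {L s : A}
    (hL : LocDegLE L₀ S (L - L₀) (-1)) (hs : s ∈ S)
    (hsT : ∀ n, ∃ k, ∂^[k] (s * (adOp L L₀)^[n] s) = 0) :
    (adOp L L₀)^[2 * degAd L₀ s + 1] s = 0 := by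
  by_contra h
  have hdeg := LocDegLE.iterate_adOp hS
    (.of_adDegLE hS.one_mem (hS.adDegLE_degAd hs)) hL (2 * degAd L₀ s + 1)
  have := hdeg.neg_degAd_le hS hs h (hsT _)
  push_cast at this
  omega

end Shift

lemma isSubspace.sub_mem {k A M : Type*} [CommRing k] [Ring A] [Algebra k A] [AddCommGroup M]
    [Module A M] {U : Set M} (hU : isSubspace k A U) {u v : M} (hu : u ∈ U) (hv : v ∈ U) :
    u - v ∈ U := by
  simpa [sub_eq_add_neg] using hU.2.1 u hu _ (hU.2.2 (-1) v hv)

lemma adOp_iterate_smul_mem {A M : Type*} [Ring A] [AddCommGroup M] [Module A M] {U₀ U : Set M}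
    {L L₀ c : A} (hU : ∀ u ∈ U, ∀ v ∈ U, u - v ∈ U) (hLU : ∀ u ∈ U, L • u ∈ U)
    (hL₀ : ∀ u ∈ U₀, L₀ • u ∈ U₀) (hc : ∀ u ∈ U₀, c • u ∈ U) (n : ℕ) :
    ∀ u ∈ U₀, (adOp L L₀)^[n] c • u ∈ U := by
  induction n with
  | zero => exact hc
  | succ n ih =>
    intro u hu
    rw [Function.iterate_succ_apply', adOp, sub_smul, mul_smul, mul_smul]
    exact hU _ (hLU _ (ih u hu)) _ (ih _ (hL₀ u hu))

theorem stmt4_general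
    {k A M : Type*} [Field k] [CharZero k] [Ring A] [IsDomain A] [Algebra k A]
    [AddCommGroup M] [Module A M]
    (B R : Subalgebra k A) (hRB : R ≤ B)
    (hRcomm : ∀ x ∈ R, ∀ y ∈ R, x * y = y * x)
    (S : Set A) (hSR : S ⊆ (R : Set A)) (hS0 : (0 : A) ∉ S) (hS1 : (1 : A) ∈ S)
    (hSmul : ∀ s ∈ S, ∀ t ∈ S, s * t ∈ S)
    (hSunit : ∀ s ∈ S, IsUnit s)
    (hleft : ∀ a : A, ∃ s ∈ S, s * a ∈ B)
    (U₀ : Set M)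
    (hB : ∀ a : A, a ∈ B ↔ ∀ u ∈ U₀, a • u ∈ U₀)
    (L₀ : A) (hL₀ : L₀ ∈ B)
    (hnil : ∀ b ∈ B, ∃ n : ℕ, (adOp L₀ L₀)^[n] b = 0)
    (L : A) (h2 : cond2 B S L₀ L)
    (U : Set M) (hU : isSubspace k A U)
    (hLU : ∀ u ∈ U, L • u ∈ U)
    (s : A) (hs : s ∈ S)
    (hsU₀ : ∀ u ∈ U₀, s • u ∈ U) (hsU : ∀ u ∈ U, s • u ∈ U₀) :
    (∃ D : A, D ≠ 0 ∧ L * D = D * L₀) ∧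
    {n : ℕ | (adOp L L₀)^[n + 1] s = 0}.Nonempty ∧
    (adOp L L₀)^[sInf {n : ℕ | (adOp L L₀)^[n + 1] s = 0}] s ≠ 0 ∧
    L * (adOp L L₀)^[sInf {n : ℕ | (adOp L L₀)^[n + 1] s = 0}] s =
      (adOp L L₀)^[sInf {n : ℕ | (adOp L L₀)^[n + 1] s = 0}] s * L₀ := by
  have : CharZero A := charZero_of_injective_algebraMap (algebraMap k A).injective
  have hS : IsAdDenominatorSet L₀ S :=
    { one_mem := hS1, zero_notMem := hS0, mul_mem := hSmul, isUnit := hSunit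
      mul_comm := fun x hx y hy => hRcomm x (hSR hx) y (hSR hy)
      nilpotent := fun t ht => hnil t (hRB (hSR ht))
      ore := fun a => let ⟨t, ht, hta⟩ := hleft a; ⟨t, ht, hnil _ hta⟩ }
  have hsT (n : ℕ) : s * (adOp L L₀)^[n] s ∈ B := (hB _).2 fun u hu => by
    rw [mul_smul]
    exact hsU _ (adOp_iterate_smul_mem (fun _ hu _ hv => hU.sub_mem hu hv) hLU
      ((hB L₀).1 hL₀) hsU₀ n u hu)
  have hN : {n : ℕ | (adOp L L₀)^[n + 1] s = 0}.Nonempty :=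
    ⟨_, adOp_iterate_eq_zero hS (locDegLE_sub_of_cond2 hS1 hnil h2) hs fun n => hnil _ (hsT n)⟩
  have hD := iterate_sInf_ne_zero (adOp L L₀) (hS.ne_zero hs)
  set N := sInf {n : ℕ | (adOp L L₀)^[n + 1] s = 0}
  have hLD : adOp L L₀ ((adOp L L₀)^[N] s) = 0 := by
    rw [← Function.iterate_succ_apply' (adOp L L₀)]
    exact Nat.sInf_mem hN
  exact ⟨⟨_, hD, sub_eq_zero.1 hLD⟩, hN, hD, sub_eq_zero.1 hLD⟩

/-- Sufficiency part of Theorem 4.4: if `L` satisfies condition (2) and there is a `k`-subspace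
`U` with `L·U ⊆ U`, `s·U₀ ⊆ U` and `s·U ⊆ U₀` for some `s ∈ S`, then a nonzero shift operator
`D` with `L·D = D·L₀` exists; in fact `D = ad_{L,L₀}^[N] s` for the smallest `N` with
`ad_{L,L₀}^[N+1] s = 0`. -/
theorem stmt4
    {k A M : Type*} [Field k] [CharZero k] [Ring A] [IsDomain A] [Algebra k A]
    [AddCommGroup M] [Module A M]
    (B R : Subalgebra k A) (hRB : R ≤ B)
    (hRcomm : ∀ x ∈ R, ∀ y ∈ R, x * y = y * x)
    (S : Set A) (hSR : S ⊆ (R : Set A)) (hS0 : (0 : A) ∉ S) (hS1 : (1 : A) ∈ S)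
    (hSmul : ∀ s ∈ S, ∀ t ∈ S, s * t ∈ S)
    (hSunit : ∀ s ∈ S, IsUnit s)
    (hleft : ∀ a : A, ∃ s ∈ S, s * a ∈ B)
    (hright : ∀ a : A, ∃ s ∈ S, a * s ∈ B)
    (U₀ : Set M) (hU₀0 : (0 : M) ∈ U₀)
    (hU₀add : ∀ u ∈ U₀, ∀ v ∈ U₀, u + v ∈ U₀)
    (hU₀neg : ∀ u ∈ U₀, -u ∈ U₀)
    (hU₀R : ∀ r ∈ (R : Set A), ∀ u ∈ U₀, r • u ∈ U₀)
    (hB : ∀ a : A, a ∈ B ↔ ∀ u ∈ U₀, a • u ∈ U₀)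
    (L₀ : A) (hL₀ : L₀ ∈ B)
    (hnil : ∀ b ∈ B, ∃ n : ℕ, (adOp L₀ L₀)^[n] b = 0)
    (L : A) (h2 : cond2 B S L₀ L)
    (U : Set M) (hU : isSubspace k A U)
    (hLU : ∀ u ∈ U, L • u ∈ U)
    (s : A) (hs : s ∈ S)
    (hsU₀ : ∀ u ∈ U₀, s • u ∈ U) (hsU : ∀ u ∈ U, s • u ∈ U₀) :
    (∃ D : A, D ≠ 0 ∧ L * D = D * L₀) ∧
    {n : ℕ | (adOp L L₀)^[n + 1] s = 0}.Nonempty ∧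
    (adOp L L₀)^[sInf {n : ℕ | (adOp L L₀)^[n + 1] s = 0}] s ≠ 0 ∧
    L * (adOp L L₀)^[sInf {n : ℕ | (adOp L L₀)^[n + 1] s = 0}] s =
      (adOp L L₀)^[sInf {n : ℕ | (adOp L L₀)^[n + 1] s = 0}] s * L₀ :=
  stmt4_general B R hRB hRcomm S hSR hS0 hS1 hSmul hSunit hleft U₀ hB L₀ hL₀ hnil L h2 U hU hLU s hs
    hsU₀ hsU
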